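/- arXiv:2602.02744 — 2 statements merged into one kernel-verified Lean document; each statement's English description precedes it below -/
import Mathlib

section
/- Let A be the b×v incidence matrix of a (v,b,r,k,λ)-BIBD with r > λ, and let Q = α·A + β·J_{b×v} with α ≠ 0 and αr + βb ≠ 0. Then there is exactly one pair of real numbers (γ, δ) such that (γ·Aᵀ + δ·J_{v×b})·Q = I_{v×v}; namely γ = 1/(α(r−λ)) and δ is determined by the equation αγλ + r(βγ + αδ) + βδb = 0. -/
open Matrix Finset

/-- For a BIBD-based matrix `Q = αA + βJ` with `α ≠ 0` and `αr + βb ≠ 0`, there is a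
unique pair `(γ, δ)` with `(γAᵀ + δJ)Q = I`; moreover any such pair satisfies
`γ = 1/(α(r−λ))` and `αγλ + r(βγ + αδ) + βδb = 0`. -/
theorem bibd_unique_structured_left_inverse
    (v b r k lam : ℕ) (hv : 2 ≤ v) (hrl : lam < r)
    (A : Matrix (Fin b) (Fin v) ℝ)
    (h01 : ∀ i j, A i j = 0 ∨ A i j = 1)
    (hrow : ∀ i, ∑ j, A i j = (k : ℝ))
    (hcol : ∀ j, ∑ i, A i j = (r : ℝ))
    (hpair : ∀ j j' : Fin v, j ≠ j' → ∑ i, A i j * A i j' = (lam : ℝ))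
    (α β : ℝ) (hα : α ≠ 0) (hab : α * r + β * b ≠ 0)
    (Q : Matrix (Fin b) (Fin v) ℝ)
    (hQ : Q = α • A + β • (Matrix.of fun _ _ => (1 : ℝ))) :
    (∃! gd : ℝ × ℝ,
        (gd.1 • Aᵀ + gd.2 • (Matrix.of fun _ _ => (1 : ℝ) : Matrix (Fin v) (Fin b) ℝ)) * Q
          = 1)
    ∧ ∀ γ δ : ℝ,
        (γ • Aᵀ + δ • (Matrix.of fun _ _ => (1 : ℝ) : Matrix (Fin v) (Fin b) ℝ)) * Q = 1 →
        γ = 1 / (α * ((r : ℝ) - lam))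
        ∧ α * γ * lam + r * (β * γ + α * δ) + β * δ * b = 0 := by
  subst hQ
  have hd : ((r : ℝ) - lam) ≠ 0 := by
    have : (lam : ℝ) < r := by exact_mod_cast hrl
    exact sub_ne_zero.2 this.ne'
  have had : α * ((r : ℝ) - lam) ≠ 0 := mul_ne_zero hα hd
  -- the product formula
  have key : ∀ γ δ : ℝ,
      (γ • Aᵀ + δ • (Matrix.of fun _ _ => (1 : ℝ) : Matrix (Fin v) (Fin b) ℝ)) *
        (α • A + β • (Matrix.of fun _ _ => (1 : ℝ))) =
      (γ * α * ((r : ℝ) - lam)) • (1 : Matrix (Fin v) (Fin v) ℝ) +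
      (α * γ * lam + r * (β * γ + α * δ) + β * δ * b) •
        (Matrix.of fun _ _ => (1 : ℝ)) := by
    intro γ δ
    ext i j
    simp only [Matrix.mul_apply, Matrix.add_apply, Matrix.smul_apply, Matrix.of_apply,
      Matrix.transpose_apply, smul_eq_mul, Matrix.one_apply]
    have hsum : ∑ m, A m i * A m j = (if i = j then (r : ℝ) else (lam : ℝ)) := by
      by_cases h : i = j
      · subst h
        rw [if_pos rfl, ← hcol i]
        refine Finset.sum_congr rfl fun m _ => ?_
        rcases h01 m i with h | h <;> simp [h]
      · rw [if_neg h]; exact hpair i j h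
    have expand : ∀ m : Fin b, (γ * A m i + δ * 1) * (α * A m j + β * 1)
        = γ * α * (A m i * A m j) + γ * β * A m i + δ * α * A m j + δ * β := by
      intro m; ring
    calc ∑ m, (γ * A m i + δ * 1) * (α * A m j + β * 1)
        = ∑ m, (γ * α * (A m i * A m j) + γ * β * A m i + δ * α * A m j + δ * β) :=
          Finset.sum_congr rfl fun m _ => expand m
      _ = γ * α * (∑ m, A m i * A m j) + γ * β * (∑ m, A m i)
            + δ * α * (∑ m, A m j) + δ * β * b := by
          rw [Finset.sum_add_distrib, Finset.sum_add_distrib, Finset.sum_add_distrib,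
            ← Finset.mul_sum, ← Finset.mul_sum, ← Finset.mul_sum, Finset.sum_const,
            Finset.card_univ, Fintype.card_fin, nsmul_eq_mul]
          ring
      _ = γ * α * (if i = j then (r : ℝ) else (lam : ℝ)) + γ * β * r + δ * α * r
            + δ * β * b := by rw [hsum, hcol i, hcol j]
      _ = _ := by by_cases h : i = j <;> simp [h] <;> ring
  set γ₀ : ℝ := 1 / (α * ((r : ℝ) - lam)) with hγ₀
  set δ₀ : ℝ := -(α * γ₀ * lam + β * γ₀ * r) / (α * r + β * b) with hδ₀
  -- characterization of solutions
  obtain ⟨i0, i1, hne⟩ : ∃ i0 i1 : Fin v, i0 ≠ i1 :=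
    ⟨⟨0, by omega⟩, ⟨1, by omega⟩, by simp [Fin.ext_iff]⟩
  have char : ∀ γ δ : ℝ,
      (γ • Aᵀ + δ • (Matrix.of fun _ _ => (1 : ℝ) : Matrix (Fin v) (Fin b) ℝ)) *
        (α • A + β • (Matrix.of fun _ _ => (1 : ℝ))) = 1 →
      γ * α * ((r : ℝ) - lam) = 1 ∧
        α * γ * lam + r * (β * γ + α * δ) + β * δ * b = 0 := by
    intro γ δ heq
    rw [key γ δ] at heq
    have e1 := congrFun (congrFun heq i0) i0
    have e2 := congrFun (congrFun heq i0) i1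
    simp only [Matrix.add_apply, Matrix.smul_apply, Matrix.of_apply, Matrix.one_apply,
      if_pos rfl, if_neg hne, eq_self_iff_true, if_true, smul_eq_mul, mul_one, mul_zero,
      zero_add] at e1 e2
    exact ⟨by linarith, e2⟩
  have hc1 : γ₀ * α * ((r : ℝ) - lam) = 1 := by
    rw [hγ₀]; field_simp
  have hc2 : α * γ₀ * lam + r * (β * γ₀ + α * δ₀) + β * δ₀ * b = 0 := by
    rw [hδ₀]; field_simp; ring
  have hsol : (γ₀ • Aᵀ + δ₀ • (Matrix.of fun _ _ => (1 : ℝ) : Matrix (Fin v) (Fin b) ℝ)) *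
      (α • A + β • (Matrix.of fun _ _ => (1 : ℝ))) = 1 := by
    rw [key γ₀ δ₀, hc1, hc2]
    simp
  refine ⟨⟨(γ₀, δ₀), hsol, ?_⟩, ?_⟩
  · rintro ⟨γ, δ⟩ heq
    obtain ⟨c1, c2⟩ := char γ δ heq
    have hγ : γ = γ₀ := by
      rw [hγ₀]
      field_simp
      linear_combination c1
    rw [hγ] at c2
    have hmul : δ * (α * r + β * b) = δ₀ * (α * r + β * b) := by
      linear_combination c2 - hc2
    have hδ : δ = δ₀ := mul_right_cancel₀ hab hmul
    exact Prod.ext hγ hδ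
  · intro γ δ heq
    obtain ⟨c1, c2⟩ := char γ δ heq
    refine ⟨?_, c2⟩
    rw [eq_div_iff had]
    linear_combination c1
end

section
/- Let (Y, 𝒴) be a set system on m points with n ≥ 2 blocks Y_x (indexed by x ∈ X), and suppose that for all real θ ∈ (0,1), the quantity q*(x,x',θ) = θ·|Y_x∩Y_{x'}|/|Y_x| + (1−θ)·(|Y_x|−|Y_x∩Y_{x'}|)/(m−|Y_x|) is independent of the choice of distinct x, x' ∈ X (all blocks are proper nonempty subsets of Y and all pairwise intersections are nonempty). Then all blocks Y_x have the same cardinality ℓ and all pairwise intersections |Y_x ∩ Y_{x'}| (x ≠ x') have the same cardinality μ. -/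
open Finset

/-- If the false-positive rate `q*(x,x',θ)` of a set-system-based LDP protocol is
independent of the choice of distinct `x, x'` for every `θ ∈ (0,1)`, then all blocks
have the same size and all pairwise intersections have the same size. -/
theorem pure_ldp_implies_constant_block_and_intersection
    (m n : ℕ) (hn : 2 ≤ n)
    (Y : Fin n → Finset (Fin m))
    (hblock : ∀ x, 0 < (Y x).card ∧ (Y x).card < m)
    (hint : ∀ x x' : Fin n, x ≠ x' → 0 < (Y x ∩ Y x').card)
    (g : ℝ → ℝ)
    (hq : ∀ θ : ℝ, 0 < θ → θ < 1 → ∀ x x' : Fin n, x ≠ x' →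
      θ * (((Y x ∩ Y x').card : ℝ) / ((Y x).card : ℝ))
        + (1 - θ) * ((((Y x).card : ℝ) - ((Y x ∩ Y x').card : ℝ))
            / ((m : ℝ) - ((Y x).card : ℝ)))
      = g θ) :
    ∃ ℓ μ : ℕ, (∀ x, (Y x).card = ℓ)
      ∧ ∀ x x' : Fin n, x ≠ x' → (Y x ∩ Y x').card = μ := by
  have ha : ∀ x x' y y' : Fin n, x ≠ x' → y ≠ y' →
      ((Y x ∩ Y x').card : ℝ) / ((Y x).card : ℝ)
        = ((Y y ∩ Y y').card : ℝ) / ((Y y).card : ℝ) := by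
    intro x x' y y' hxx hyy
    have h1 := hq (1/3) (by norm_num) (by norm_num) x x' hxx
    have h2 := hq (1/2) (by norm_num) (by norm_num) x x' hxx
    have h3 := hq (1/3) (by norm_num) (by norm_num) y y' hyy
    have h4 := hq (1/2) (by norm_num) (by norm_num) y y' hyy
    set a1 := ((Y x ∩ Y x').card : ℝ) / ((Y x).card : ℝ)
    set b1 := (((Y x).card : ℝ) - ((Y x ∩ Y x').card : ℝ)) / ((m : ℝ) - ((Y x).card : ℝ))
    set a2 := ((Y y ∩ Y y').card : ℝ) / ((Y y).card : ℝ)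
    set b2 := (((Y y).card : ℝ) - ((Y y ∩ Y y').card : ℝ)) / ((m : ℝ) - ((Y y).card : ℝ))
    linarith
  have hcardpos : ∀ x : Fin n, (0:ℝ) < ((Y x).card : ℝ) := fun x => by
    exact_mod_cast (hblock x).1
  have hsame : ∀ x x' : Fin n, x ≠ x' → (Y x).card = (Y x').card := by
    intro x x' hxx
    have h := ha x x' x' x hxx hxx.symm
    rw [inter_comm (Y x') (Y x)] at h
    have hI : (0:ℝ) < ((Y x ∩ Y x').card : ℝ) := by exact_mod_cast hint x x' hxx
    rw [div_eq_div_iff (ne_of_gt (hcardpos x)) (ne_of_gt (hcardpos x'))] at h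
    exact_mod_cast (mul_left_cancel₀ (ne_of_gt hI) h).symm
  let x0 : Fin n := ⟨0, by omega⟩
  let x1 : Fin n := ⟨1, by omega⟩
  have h01 : x0 ≠ x1 := by simp [x0, x1, Fin.ext_iff]
  refine ⟨(Y x0).card, (Y x0 ∩ Y x1).card, ?_, ?_⟩
  · intro x
    by_cases hx : x = x0
    · rw [hx]
    · exact hsame x x0 hx
  · intro x x' hxx
    have h := ha x x' x0 x1 hxx h01
    have hℓ : ((Y x).card : ℝ) = ((Y x0).card : ℝ) := by
      by_cases hx : x = x0
      · rw [hx]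
      · exact_mod_cast hsame x x0 hx
    rw [hℓ] at h
    rw [div_eq_div_iff (ne_of_gt (hcardpos x0)) (ne_of_gt (hcardpos x0))] at h
    exact_mod_cast mul_right_cancel₀ (ne_of_gt (hcardpos x0)) h
end
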